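/- If V is a finite dimensional real vector space, then any two probabilistic norms ν of (V, ν, τ, τ*) and μ of (V, μ, τ', τ'*) are equivalent (a sequence converges strongly in ν iff it converges strongly in μ), provided τ* and τ'* are Archimedean and ν_p ≠ ε_∞, μ_p ≠ ε_∞ for every p ∈ V. -/

import Mathlib

open Filter Topology

noncomputable section

/-- A distance distribution function: nondecreasing, left-continuous,
vanishing on `(-∞,0]`, bounded by `1`. -/
def DDF (F : ℝ → ℝ) : Prop :=
  Monotone F ∧ (∀ x ≤ 0, F x = 0) ∧ (∀ x, F x ≤ 1) ∧
    ∀ x, Tendsto F (nhdsWithin x (Set.Iio x)) (nhds (F x))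

/-- The unit step at `0`. -/
def eps0 : ℝ → ℝ := fun x => if x ≤ 0 then 0 else 1

/-- The unit step at `c`. -/
def epsc (c : ℝ) : ℝ → ℝ := fun x => if x ≤ c then 0 else 1

/-- `ε∞`: identically 0 on `ℝ` (value 1 only at `+∞`). -/
def epsInf : ℝ → ℝ := fun _ => 0

/-- Membership in `D⁺`: the distribution function tends to `1` at `+∞`. -/
def InDPlus (F : ℝ → ℝ) : Prop := Tendsto F atTop (nhds 1)

/-- Weak convergence of distribution functions. -/
def WeakConv (Fn : ℕ → ℝ → ℝ) (F : ℝ → ℝ) : Prop :=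
  ∀ x, ContinuousAt F x → Tendsto (fun n => Fn n x) atTop (nhds (F x))

/-- A continuous triangle function on `Δ⁺`. -/
def IsTriangleFunction (τ : (ℝ → ℝ) → (ℝ → ℝ) → (ℝ → ℝ)) : Prop :=
  (∀ F G, DDF F → DDF G → DDF (τ F G)) ∧
  (∀ F G H, DDF F → DDF G → DDF H → τ (τ F G) H = τ F (τ G H)) ∧
  (∀ F G, DDF F → DDF G → τ F G = τ G F) ∧
  (∀ F G H, DDF F → DDF G → DDF H → F ≤ G → τ F H ≤ τ G H) ∧
  (∀ F, DDF F → τ F eps0 = F) ∧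
  (∀ (Fn : ℕ → ℝ → ℝ) F G, (∀ n, DDF (Fn n)) → DDF F → DDF G →
    WeakConv Fn F → WeakConv (fun n => τ (Fn n) G) (τ F G))

/-- A probabilistic normed space `(V, ν, τ, τ*)`. -/
structure IsPNSpace (V : Type) [AddCommGroup V] [Module ℝ V]
    (ν : V → ℝ → ℝ) (τ τs : (ℝ → ℝ) → (ℝ → ℝ) → (ℝ → ℝ)) : Prop where
  ddf : ∀ p, DDF (ν p)
  tri : IsTriangleFunction τ
  tris : IsTriangleFunction τs
  tle : ∀ F G, DDF F → DDF G → τ F G ≤ τs F G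
  n1 : ∀ p, ν p = eps0 ↔ p = 0
  n2 : ∀ p, ν (-p) = ν p
  n3 : ∀ p q, τ (ν p) (ν q) ≤ ν (p + q)
  n4 : ∀ (p : V) (l : ℝ), 0 ≤ l → l ≤ 1 →
    ν p ≤ τs (ν (l • p)) (ν ((1 - l) • p))

/-- Archimedean triangle function: no idempotents besides `ε₀` and `ε∞`. -/
def IsArchimedean (τ : (ℝ → ℝ) → (ℝ → ℝ) → (ℝ → ℝ)) : Prop :=
  ∀ F, DDF F → τ F F = F → F = eps0 ∨ F = epsInf

/-- Strong convergence of a sequence in a PN space. -/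
def StrongConv {V : Type} [AddCommGroup V] (ν : V → ℝ → ℝ)
    (q : ℕ → V) (p : V) : Prop :=
  ∀ l : ℝ, 0 < l → ∀ᶠ n in atTop, ν (q n - p) l > 1 - l

/-- Strongly Cauchy sequence in a PN space. -/
def StrongCauchy {V : Type} [AddCommGroup V] (ν : V → ℝ → ℝ) (q : ℕ → V) : Prop :=
  ∀ l : ℝ, 0 < l → ∃ N, ∀ m n, N ≤ m → N ≤ n → ν (q m - q n) l > 1 - l

/-- `A` is `D`-bounded: some `G ∈ D⁺` lies below all `ν p`, `p ∈ A`. -/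
def DBounded {V : Type} (ν : V → ℝ → ℝ) (A : Set V) : Prop :=
  ∃ G : ℝ → ℝ, DDF G ∧ InDPlus G ∧ ∀ p ∈ A, G ≤ ν p

/-- `A` is `D`-compact: every sequence in `A` has a subsequence strongly
convergent to a point of `A`. -/
def DCompact {V : Type} [AddCommGroup V] (ν : V → ℝ → ℝ) (A : Set V) : Prop :=
  ∀ q : ℕ → V, (∀ n, q n ∈ A) → ∃ φ : ℕ → ℕ, StrictMono φ ∧
    ∃ p ∈ A, StrongConv ν (q ∘ φ) p

/-- `A` is closed under strong convergence of sequences. -/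
def SeqClosed {V : Type} [AddCommGroup V] (ν : V → ℝ → ℝ) (A : Set V) : Prop :=
  ∀ (q : ℕ → V) (p : V), (∀ n, q n ∈ A) → StrongConv ν q p → p ∈ A

/-- The probabilistic radius `R_A(x) = l⁻ inf {ν p x : p ∈ A}`. -/
def probRadius {V : Type} (ν : V → ℝ → ℝ) (A : Set V) (x : ℝ) : ℝ :=
  ⨆ y : Set.Iio x, ⨅ p : A, ν (p : V) (y : ℝ)

/-! Strong convergence in `(V, ν, τ, τ*)` is convergence for the group topology whose basic
neighbourhoods of `0` are `{v | ν v l > 1 - l}`; the triangle inequality makes these sets a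
group filter basis. This topology is Hausdorff because `ν v = ε₀` only for `v = 0`, and it makes
scalar multiplication continuous: the only delicate point is `t • p → 0` as `t → 0`, and there
the supremum of the distribution functions `ν (2⁻ᵐ • p)` is an idempotent of `τ*`, hence `ε₀`
by the Archimedean property, since `ν p ≠ ε∞` rules out `ε∞`. A finite dimensional real vector
space carries only one Hausdorff vector topology, so both norms have the same convergent
sequences. -/

open scoped Pointwise

lemma eps0_of_pos {l : ℝ} (hl : 0 < l) : eps0 l = 1 := if_neg (not_le.2 hl)

namespace DDF

variable {F : ℝ → ℝ}

lemma nonneg (hF : DDF F) (x : ℝ) : 0 ≤ F x := by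
  rcases le_or_gt x 0 with hx | hx
  · exact (hF.2.1 x hx).ge
  · exact (hF.2.1 0 le_rfl).ge.trans (hF.1 hx.le)

lemma le_eps0 (hF : DDF F) : F ≤ eps0 := by
  intro x
  unfold eps0
  split_ifs with hx
  · exact (hF.2.1 x hx).le
  · exact hF.2.2.1 x

lemma eq_eps0 (hF : DDF F) (h : ∀ l, 0 < l → 1 - l < F l) : F = eps0 := by
  funext x
  rcases le_or_gt x 0 with hx | hx
  · rw [hF.2.1 x hx, eps0, if_pos hx]
  · refine le_antisymm (hF.le_eps0 x) ?_
    rw [eps0_of_pos hx]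
    by_contra! hlt
    have hmin := h _ (lt_min hx (by linarith) : 0 < min x (1 - F x))
    linarith [hF.1 (min_le_left x (1 - F x)), min_le_right x (1 - F x)]

lemma iSup {ι : Type*} [Nonempty ι] {F : ι → ℝ → ℝ} (hF : ∀ i, DDF (F i)) :
    DDF fun x => ⨆ i, F i x := by
  have hbdd : ∀ x, BddAbove (Set.range fun i => F i x) :=
    fun x => ⟨1, by rintro _ ⟨i, rfl⟩; exact (hF i).2.2.1 x⟩
  have hmono : Monotone fun x => ⨆ i, F i x :=
    fun x y hxy => ciSup_mono (hbdd y) fun i => (hF i).1 hxy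
  refine ⟨hmono, fun x hx => by simp only [(hF _).2.1 x hx, ciSup_const],
    fun x => ciSup_le fun i => (hF i).2.2.1 x, fun x => ?_⟩
  rw [tendsto_order]
  refine ⟨fun a ha => ?_, fun a ha => ?_⟩
  · obtain ⟨i, hi⟩ := exists_lt_of_lt_ciSup ha
    filter_upwards [((hF i).2.2.2 x).eventually_const_lt hi] with y hy
    exact hy.trans_le (le_ciSup (hbdd y) i)
  · filter_upwards [self_mem_nhdsWithin] with y hy
    exact (hmono (le_of_lt hy)).trans_lt ha

end DDF

def levyStep (a : ℝ) : ℝ → ℝ := fun x => if x ≤ a then 0 else 1 - a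

lemma levyStep_zero : levyStep 0 = eps0 := by
  funext x
  simp [levyStep, eps0]

lemma ddf_levyStep {a : ℝ} (ha₀ : 0 ≤ a) (ha₁ : a ≤ 1) : DDF (levyStep a) := by
  refine ⟨fun x y hxy => ?_, fun x hx => if_pos (hx.trans ha₀), fun x => ?_, fun x => ?_⟩
  · unfold levyStep
    split_ifs <;> linarith
  · unfold levyStep
    split_ifs <;> linarith
  · rcases le_or_gt x a with hx | hx
    · refine tendsto_nhdsWithin_congr (f := fun _ => 0) (fun y hy => ?_) ?_
      · exact (if_pos ((le_of_lt hy).trans hx)).symm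
      · rw [levyStep, if_pos hx]
        exact tendsto_const_nhds
    · refine tendsto_const_nhds.congr' ?_
      filter_upwards [Ioo_mem_nhdsLT hx] with y hy
      rw [levyStep, levyStep, if_neg (not_le.2 hx), if_neg (not_le.2 hy.1)]

lemma ddf_eps0 : DDF eps0 := levyStep_zero ▸ ddf_levyStep le_rfl zero_le_one

lemma levyStep_le_levyStep {a b : ℝ} (hab : a ≤ b) (ha : a ≤ 1) : levyStep b ≤ levyStep a := by
  intro x
  unfold levyStep
  split_ifs <;> linarith

lemma levyStep_le {F : ℝ → ℝ} (hF : DDF F) {a : ℝ} (h : 1 - a < F a) : levyStep a ≤ F := by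
  intro x
  unfold levyStep
  split_ifs with hx
  · exact hF.nonneg x
  · exact h.le.trans (hF.1 (le_of_not_ge hx))

lemma weakConv_levyStep {c : ℕ → ℝ} (hc : Tendsto c atTop (𝓝[>] 0)) :
    WeakConv (fun n => levyStep (c n)) eps0 := by
  intro x _
  have hc₀ : Tendsto c atTop (𝓝 0) := tendsto_nhds_of_tendsto_nhdsWithin hc
  rcases le_or_gt x 0 with hx | hx
  · refine tendsto_const_nhds.congr' ?_
    filter_upwards [hc.eventually self_mem_nhdsWithin] with n hn
    rw [levyStep, eps0, if_pos hx, if_pos (hx.trans (le_of_lt hn))]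
  · rw [eps0_of_pos hx]
    have h1 : Tendsto (fun n => 1 - c n) atTop (𝓝 1) := by
      simpa using tendsto_const_nhds.sub hc₀
    refine h1.congr' ?_
    filter_upwards [hc₀.eventually_lt_const hx] with n hn
    rw [levyStep, if_neg (not_le.2 hn)]

namespace IsTriangleFunction

variable {τ : (ℝ → ℝ) → (ℝ → ℝ) → (ℝ → ℝ)} {F G H : ℝ → ℝ}

lemma ddf (ht : IsTriangleFunction τ) (hF : DDF F) (hG : DDF G) : DDF (τ F G) :=
  ht.1 F G hF hG

lemma comm (ht : IsTriangleFunction τ) (hF : DDF F) (hG : DDF G) : τ F G = τ G F :=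
  ht.2.2.1 F G hF hG

lemma mono_left (ht : IsTriangleFunction τ) (hF : DDF F) (hG : DDF G) (hH : DDF H)
    (h : F ≤ G) : τ F H ≤ τ G H :=
  ht.2.2.2.1 F G H hF hG hH h

lemma mono_right (ht : IsTriangleFunction τ) (hF : DDF F) (hG : DDF G) (hH : DDF H)
    (h : G ≤ H) : τ F G ≤ τ F H := by
  rw [ht.comm hF hG, ht.comm hF hH]
  exact ht.mono_left hG hH hF h

lemma eps0_right (ht : IsTriangleFunction τ) (hF : DDF F) : τ F eps0 = F := ht.2.2.2.2.1 F hF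

lemma eps0_left (ht : IsTriangleFunction τ) (hF : DDF F) : τ eps0 F = F := by
  rw [ht.comm ddf_eps0 hF, ht.eps0_right hF]

lemma weakConv_left (ht : IsTriangleFunction τ) {Fn : ℕ → ℝ → ℝ} (hFn : ∀ n, DDF (Fn n))
    (hF : DDF F) (hG : DDF G) (h : WeakConv Fn F) : WeakConv (fun n => τ (Fn n) G) (τ F G) :=
  ht.2.2.2.2.2 Fn F G hFn hF hG h

lemma le_left (ht : IsTriangleFunction τ) (hF : DDF F) (hG : DDF G) : τ F G ≤ F :=
  (ht.mono_right hF hG ddf_eps0 hG.le_eps0).trans (ht.eps0_right hF).le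

/-- Continuity of `τ` at `(ε₀, ε₀)`, in terms of the Lévy neighbourhoods of `ε₀`. -/
lemma exists_pos_lt_apply (ht : IsTriangleFunction τ) {l : ℝ} (hl : 0 < l) :
    ∃ a, 0 < a ∧ ∀ F G, DDF F → DDF G → 1 - a < F a → 1 - a < G a → 1 - l < τ F G l := by
  set b := min l 1 / 2 with hb
  have hb₀ : 0 < b := by positivity
  have hbl : 2 * b ≤ l := by rw [hb]; linarith [min_le_left l 1]
  have hb₁ : b ≤ 1 / 2 := by rw [hb]; linarith [min_le_right l 1]
  set c : ℕ → ℝ := fun n => b / (n + 1)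
  have hc₀ : ∀ n, 0 < c n := fun n => by positivity
  have hcb : ∀ n, c n ≤ b := fun n => div_le_self hb₀.le (by linarith [n.cast_nonneg (α := ℝ)])
  have hc : Tendsto c atTop (𝓝[>] 0) := by
    refine tendsto_nhdsWithin_iff.2 ⟨?_, Eventually.of_forall hc₀⟩
    simpa [c, div_eq_mul_inv] using tendsto_one_div_add_atTop_nhds_zero_nat.const_mul b
  have hG₀ : DDF (levyStep b) := ddf_levyStep hb₀.le (by linarith)
  have hstep : ∀ n, DDF (levyStep (c n)) := fun n =>
    ddf_levyStep (hc₀ n).le (by linarith [hcb n])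
  -- `τ (levyStep (c n)) (levyStep b) → levyStep b`, which is continuous at `2 * b`
  have hcont : ContinuousAt (τ eps0 (levyStep b)) (2 * b) := by
    rw [ht.eps0_left hG₀]
    refine (continuousAt_const (y := 1 - b)).congr ?_
    filter_upwards [Ioi_mem_nhds (by linarith : b < 2 * b)] with y hy
    exact (if_neg (not_le.2 hy)).symm
  have hlim := ht.weakConv_left hstep ddf_eps0 hG₀ (weakConv_levyStep hc) (2 * b) hcont
  rw [ht.eps0_left hG₀, levyStep, if_neg (by linarith)] at hlim
  obtain ⟨N, hN⟩ := (hlim.eventually_const_lt (by linarith : 1 - 2 * b < 1 - b)).exists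
  refine ⟨c N, hc₀ N, fun F G hF hG hFa hGa => ?_⟩
  have hbG : levyStep b ≤ G :=
    (levyStep_le_levyStep (hcb N) (by linarith [hcb N])).trans (levyStep_le hG hGa)
  calc 1 - l ≤ 1 - 2 * b := by linarith
    _ < τ (levyStep (c N)) (levyStep b) (2 * b) := hN
    _ ≤ τ F (levyStep b) (2 * b) := ht.mono_left (hstep N) hF hG₀ (levyStep_le hF hFa) _
    _ ≤ τ F G (2 * b) := ht.mono_right hF hG₀ hG hbG _
    _ ≤ τ F G l := (ht.ddf hF hG).1 hbl

lemma idempotent_iSup (ht : IsTriangleFunction τ) {F : ℕ → ℝ → ℝ} (hF : ∀ m, DDF (F m))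
    (hstep : ∀ m, F m ≤ τ (F (m + 1)) (F (m + 1))) :
    τ (fun x => ⨆ m, F m x) (fun x => ⨆ m, F m x) = fun x => ⨆ m, F m x := by
  set S : ℝ → ℝ := fun x => ⨆ m, F m x
  have hS : DDF S := DDF.iSup hF
  have hFS : ∀ m, F m ≤ S := fun m x =>
    le_ciSup (f := fun m => F m x) ⟨1, by rintro _ ⟨i, rfl⟩; exact (hF i).2.2.1 x⟩ m
  refine le_antisymm (ht.le_left hS hS) fun x => ciSup_le fun m => ?_
  calc F m x ≤ τ (F (m + 1)) (F (m + 1)) x := hstep m x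
    _ ≤ τ S (F (m + 1)) x := ht.mono_left (hF _) hS (hF _) (hFS _) x
    _ ≤ τ S S x := ht.mono_right hS (hF _) hS (hFS _) x

end IsTriangleFunction

def strongNhd {V : Type} (ν : V → ℝ → ℝ) (l : ℝ) : Set V := {v | 1 - l < ν v l}

namespace IsPNSpace

variable {V : Type} [AddCommGroup V] [Module ℝ V] {ν : V → ℝ → ℝ}
  {τ τs : (ℝ → ℝ) → (ℝ → ℝ) → (ℝ → ℝ)}

lemma apply_zero (hν : IsPNSpace V ν τ τs) : ν 0 = eps0 := (hν.n1 0).2 rfl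

lemma apply_smul_le_of_abs_le (hν : IsPNSpace V ν τ τs) (p : V) {s t : ℝ} (h : |s| ≤ |t|) :
    ν (t • p) ≤ ν (s • p) := by
  have habs : ∀ r : ℝ, ν (r • p) = ν (|r| • p) := fun r => by
    rcases abs_choice r with hr | hr <;> rw [hr]
    rw [neg_smul, hν.n2]
  rw [habs s, habs t]
  rcases (abs_nonneg s).trans h |>.eq_or_lt with ht | ht
  · rw [← ht, le_antisymm (ht ▸ h) (abs_nonneg s)]
  -- `|s| • p` and `(1 - |s| / |t|) • (|t| • p)` split `|t| • p`, and `τ*` lies below its arguments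
  have hsplit := hν.n4 (|t| • p) (|s| / |t|) (by positivity) ((div_le_one ht).2 h)
  rw [smul_smul, div_mul_cancel₀ _ ht.ne'] at hsplit
  exact hsplit.trans (hν.tris.le_left (hν.ddf _) (hν.ddf _))

lemma strongNhd_mono (hν : IsPNSpace V ν τ τs) {l l' : ℝ} (h : l ≤ l') :
    strongNhd ν l ⊆ strongNhd ν l' := fun v hv =>
  calc 1 - l' ≤ 1 - l := by linarith
    _ < ν v l := hv
    _ ≤ ν v l' := (hν.ddf v).1 h

lemma zero_mem_strongNhd (hν : IsPNSpace V ν τ τs) {l : ℝ} (hl : 0 < l) :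
    (0 : V) ∈ strongNhd ν l := by
  simp only [strongNhd, Set.mem_ofPred_eq, hν.apply_zero, eps0_of_pos hl]
  linarith

lemma neg_mem_strongNhd (hν : IsPNSpace V ν τ τs) {l : ℝ} {v : V} (hv : v ∈ strongNhd ν l) :
    -v ∈ strongNhd ν l := by
  simpa only [strongNhd, Set.mem_ofPred_eq, hν.n2] using hv

lemma exists_strongNhd_add_subset (hν : IsPNSpace V ν τ τs) {l : ℝ} (hl : 0 < l) :
    ∃ a, 0 < a ∧ strongNhd ν a + strongNhd ν a ⊆ strongNhd ν l := by
  obtain ⟨a, ha, hτ⟩ := hν.tri.exists_pos_lt_apply hl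
  refine ⟨a, ha, ?_⟩
  rintro _ ⟨v, hv, w, hw, rfl⟩
  exact (hτ _ _ (hν.ddf v) (hν.ddf w) hv hw).trans_le (hν.n3 v w l)

lemma smul_mem_strongNhd (hν : IsPNSpace V ν τ τs) {l s : ℝ} {v : V} (hs : |s| ≤ 1)
    (hv : v ∈ strongNhd ν l) : s • v ∈ strongNhd ν l := by
  have h := hν.apply_smul_le_of_abs_le v (t := 1) (by simpa using hs)
  rw [one_smul] at h
  exact hv.trans_le (h l)

lemma eq_zero_of_forall_mem_strongNhd (hν : IsPNSpace V ν τ τs) {v : V}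
    (h : ∀ l, 0 < l → v ∈ strongNhd ν l) : v = 0 :=
  (hν.n1 v).1 ((hν.ddf v).eq_eps0 h)

lemma eventually_smul_mem_strongNhd (hν : IsPNSpace V ν τ τs) (harch : IsArchimedean τs)
    (hne : ∀ p : V, ν p ≠ epsInf) (p : V) {l : ℝ} (hl : 0 < l) :
    ∀ᶠ t in 𝓝 (0 : ℝ), t • p ∈ strongNhd ν l := by
  set F : ℕ → ℝ → ℝ := fun m => ν ((2⁻¹ : ℝ) ^ m • p)
  have hF : ∀ m, DDF (F m) := fun m => hν.ddf _
  have hhalf : ∀ m, F m ≤ τs (F (m + 1)) (F (m + 1)) := fun m => by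
    have h := hν.n4 ((2⁻¹ : ℝ) ^ m • p) 2⁻¹ (by norm_num) (by norm_num)
    rwa [show (1 : ℝ) - 2⁻¹ = 2⁻¹ by norm_num, smul_smul, ← pow_succ'] at h
  set S : ℝ → ℝ := fun x => ⨆ m, F m x
  have hFS : F 0 ≤ S := fun x =>
    le_ciSup (f := fun m => F m x) ⟨1, by rintro _ ⟨i, rfl⟩; exact (hF i).2.2.1 x⟩ 0
  rcases harch S (DDF.iSup hF) (hν.tris.idempotent_iSup hF hhalf) with hS | hS
  · have h1 : 1 - l < S l := by rw [hS, eps0_of_pos hl]; linarith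
    obtain ⟨m, hm⟩ := exists_lt_of_lt_ciSup h1
    have hδ : (0 : ℝ) < 2⁻¹ ^ m := by positivity
    filter_upwards [Icc_mem_nhds (neg_lt_zero.2 hδ) hδ] with t ht
    have hle : |t| ≤ |(2⁻¹ : ℝ) ^ m| := by rw [abs_of_pos hδ]; exact abs_le.2 ht
    exact hm.trans_le (hν.apply_smul_le_of_abs_le p hle l)
  · refine absurd (funext fun x => ?_) (hne p)
    have h0 := hFS x
    simp only [hS, epsInf, F, pow_zero, one_smul] at h0 ⊢
    exact le_antisymm h0 ((hν.ddf p).nonneg x)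

end IsPNSpace

lemma strongConv_iff_tendsto {V : Type} [AddCommGroup V] [TopologicalSpace V]
    [IsTopologicalAddGroup V] {ν : V → ℝ → ℝ}
    (hb : (𝓝 (0 : V)).HasBasis (fun l : ℝ => 0 < l) (strongNhd ν))
    (q : ℕ → V) (p : V) : StrongConv ν q p ↔ Tendsto q atTop (𝓝 p) := by
  rw [← tendsto_sub_nhds_zero_iff, hb.tendsto_right_iff]
  rfl

section StrongTopology

variable {V : Type} [AddCommGroup V] [Module ℝ V] {ν : V → ℝ → ℝ}
  {τ τs : (ℝ → ℝ) → (ℝ → ℝ) → (ℝ → ℝ)}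

lemma IsPNSpace.exists_topology (hν : IsPNSpace V ν τ τs) :
    ∃ t : TopologicalSpace V, @IsTopologicalAddGroup V t _ ∧
      (@nhds V t 0).HasBasis (fun l : ℝ => 0 < l) (strongNhd ν) := by
  let B : AddGroupFilterBasis V := addGroupFilterBasisOfComm (strongNhd ν '' Set.Ioi 0)
    ⟨_, Set.mem_image_of_mem _ (Set.mem_Ioi.2 one_pos)⟩
    (by
      rintro _ _ ⟨l, hl, rfl⟩ ⟨l', hl', rfl⟩
      exact ⟨_, Set.mem_image_of_mem _ (Set.mem_Ioi.2 (lt_min hl hl')),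
        Set.subset_inter (hν.strongNhd_mono (min_le_left _ _))
          (hν.strongNhd_mono (min_le_right _ _))⟩)
    (by rintro _ ⟨l, hl, rfl⟩; exact hν.zero_mem_strongNhd hl)
    (by
      rintro _ ⟨l, hl, rfl⟩
      obtain ⟨a, ha, hadd⟩ := hν.exists_strongNhd_add_subset hl
      exact ⟨_, Set.mem_image_of_mem _ ha, hadd⟩)
    (by
      rintro _ ⟨l, hl, rfl⟩
      exact ⟨_, Set.mem_image_of_mem _ hl, fun v hv => hν.neg_mem_strongNhd hv⟩)
  refine ⟨B.topology, B.isTopologicalAddGroup, ?_⟩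
  exact B.nhds_zero_hasBasis.to_hasBasis (by rintro _ ⟨l, hl, rfl⟩; exact ⟨l, hl, le_rfl⟩)
    fun l hl => ⟨_, Set.mem_image_of_mem _ hl, le_rfl⟩

variable [TopologicalSpace V] [IsTopologicalAddGroup V]

lemma IsPNSpace.t2Space (hν : IsPNSpace V ν τ τs)
    (hb : (𝓝 (0 : V)).HasBasis (fun l : ℝ => 0 < l) (strongNhd ν)) : T2Space V := by
  refine IsTopologicalAddGroup.t2Space_of_zero_sep fun v hv => ?_
  by_contra! h
  exact hv (hν.eq_zero_of_forall_mem_strongNhd fun l hl => h _ (hb.mem_of_mem hl))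

lemma IsPNSpace.continuousSMul (hν : IsPNSpace V ν τ τs) (harch : IsArchimedean τs)
    (hne : ∀ p : V, ν p ≠ epsInf)
    (hb : (𝓝 (0 : V)).HasBasis (fun l : ℝ => 0 < l) (strongNhd ν)) : ContinuousSMul ℝ V := by
  refine ContinuousSMul.of_basis_zero hb (fun {l} hl => ?_) (fun s l hl => ?_)
    (fun p l hl => hν.eventually_smul_mem_strongNhd harch hne p hl)
  · refine ⟨Set.Icc (-1) 1, Icc_mem_nhds (by norm_num) one_pos, l, hl, ?_⟩
    rintro _ ⟨s, hs, v, hv, rfl⟩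
    exact hν.smul_mem_strongNhd (abs_le.2 hs) hv
  · -- `s • v = (s / n) • (n • v)` with `|s| ≤ n`, and `v ↦ n • v` is continuous
    obtain ⟨n, hn⟩ := exists_nat_gt |s|
    have hn₀ : (0 : ℝ) < n := (abs_nonneg s).trans_lt hn
    have hcont := (continuous_nsmul (M := V) n).tendsto 0
    rw [nsmul_zero, hb.tendsto_iff hb] at hcont
    obtain ⟨a, ha, hmaps⟩ := hcont l hl
    refine ⟨a, ha, fun v hv => ?_⟩
    have hsmul : s • v = (s / n) • (n • v) := by
      rw [← Nat.cast_smul_eq_nsmul ℝ, smul_smul, div_mul_cancel₀ _ hn₀.ne']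
    show s • v ∈ _
    rw [hsmul]
    refine hν.smul_mem_strongNhd ?_ (hmaps v hv)
    rw [abs_div, Nat.abs_cast]
    exact div_le_one_of_le₀ hn.le hn₀.le

end StrongTopology

lemma IsPNSpace.strongConv_iff_tendsto_moduleTopology {V : Type} [AddCommGroup V] [Module ℝ V]
    [FiniteDimensional ℝ V] {ν : V → ℝ → ℝ} {τ τs : (ℝ → ℝ) → (ℝ → ℝ) → (ℝ → ℝ)}
    (hν : IsPNSpace V ν τ τs) (harch : IsArchimedean τs) (hne : ∀ p : V, ν p ≠ epsInf)
    (q : ℕ → V) (p : V) :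
    StrongConv ν q p ↔ @Tendsto ℕ V q atTop (@nhds V (moduleTopology ℝ V) p) := by
  obtain ⟨t, _, hb⟩ := hν.exists_topology
  have := hν.t2Space hb
  have := hν.continuousSMul harch hne hb
  have := isModuleTopologyOfFiniteDimensional (𝕜 := ℝ) (E := V)
  rw [strongConv_iff_tendsto hb, ← eq_moduleTopology ℝ V]

/-- On a finite dimensional space, any two strong-TVS probabilistic norms are
equivalent: they have the same strongly convergent sequences. -/
theorem statement9 {V : Type} [AddCommGroup V] [Module ℝ V]
    [FiniteDimensional ℝ V]
    (ν μ : V → ℝ → ℝ) (τ τs τ' τ's : (ℝ → ℝ) → (ℝ → ℝ) → (ℝ → ℝ))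
    (hν : IsPNSpace V ν τ τs) (hμ : IsPNSpace V μ τ' τ's)
    (harch : IsArchimedean τs) (harch' : IsArchimedean τ's)
    (hne : ∀ p : V, ν p ≠ epsInf) (hne' : ∀ p : V, μ p ≠ epsInf) :
    ∀ (q : ℕ → V) (p : V), StrongConv ν q p ↔ StrongConv μ q p := by
  intro q p
  rw [hν.strongConv_iff_tendsto_moduleTopology harch hne,
    hμ.strongConv_iff_tendsto_moduleTopology harch' hne']
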